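/- arXiv:1208.5913 — 5 statements merged into one kernel-verified Lean document; each statement's English description precedes it below -/
import Mathlib

section
/- In the logic LDiiP, the self-proof of truthfulness law holds: ⊢ M ⊩_a ((M ⊩_a φ) → φ), i.e., M proves to a that if M proves φ to a then φ holds. -/
/-- Formulas of LDiiP over agents and messages. -/
inductive Fm (Agent Msg : Type) : Type where
  | atom : Nat → Fm Agent Msg
  | knows : Agent → Msg → Fm Agent Msg
  | bot : Fm Agent Msg
  | imp : Fm Agent Msg → Fm Agent Msg → Fm Agent Msg
  | and : Fm Agent Msg → Fm Agent Msg → Fm Agent Msg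
  | or : Fm Agent Msg → Fm Agent Msg → Fm Agent Msg
  | neg : Fm Agent Msg → Fm Agent Msg
  | proves : Msg → Agent → Fm Agent Msg → Fm Agent Msg

def Fm.iff {Agent Msg : Type} (p q : Fm Agent Msg) : Fm Agent Msg :=
  (p.imp q).and (q.imp p)

/-- Classical evaluation of a formula, treating atoms, knowledge atoms and
modal formulas as opaque propositions assigned by `v`. -/
def Fm.eval {Agent Msg : Type} (v : Fm Agent Msg → Prop) : Fm Agent Msg → Prop
  | .bot => False
  | .imp p q => Fm.eval v p → Fm.eval v q
  | .and p q => Fm.eval v p ∧ Fm.eval v q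
  | .or p q => Fm.eval v p ∨ Fm.eval v q
  | .neg p => ¬ Fm.eval v p
  | φ => v φ

/-- A classical (propositional) tautology schema. -/
def Fm.Taut {Agent Msg : Type} (φ : Fm Agent Msg) : Prop :=
  ∀ v, φ.eval v

/-- The logic LDiiP: a normal modal logic with proof modality `proves M a φ`
(`M ⊩_a φ`), containing all classical tautologies, with axioms of
self-knowledge, Kripke's law, epistemic truthfulness, proof consistency and
negation completeness, closed under modus ponens and necessitation. -/
structure LDiiP (Agent Msg : Type) where
  Thm : Fm Agent Msg → Prop
  taut : ∀ {φ : Fm Agent Msg}, φ.Taut → Thm φ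
  mp : ∀ {φ ψ : Fm Agent Msg}, Thm (φ.imp ψ) → Thm φ → Thm ψ
  nec : ∀ (M : Msg) (a : Agent) {φ : Fm Agent Msg}, Thm φ → Thm (.proves M a φ)
  selfKnow : ∀ (M : Msg) (a : Agent), Thm (.proves M a (.knows a M))
  kripke : ∀ (M : Msg) (a : Agent) (φ ψ : Fm Agent Msg),
    Thm ((Fm.proves M a (φ.imp ψ)).imp ((Fm.proves M a φ).imp (Fm.proves M a ψ)))
  epistemic : ∀ (M : Msg) (a : Agent) (φ : Fm Agent Msg),
    Thm ((Fm.proves M a φ).imp ((Fm.knows a M).imp φ))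
  consistency : ∀ (M : Msg) (a : Agent), Thm (Fm.neg (Fm.proves M a Fm.bot))
  negComplete : ∀ (M : Msg) (a : Agent) (φ : Fm Agent Msg),
    Thm ((Fm.proves M a φ).or (Fm.proves M a (Fm.neg φ)))

/-! Epistemic truthfulness gives `⊢ k_a(M) → ((M ⊩_a φ) → φ)`, and every consequence of
`k_a(M)` is proved by `M` to `a`: necessitate the implication and discharge its premise with
self-knowledge through Kripke's law. -/

namespace LDiiP

variable {Agent Msg : Type} (L : LDiiP Agent Msg)

theorem thm_imp_comm {φ ψ χ : Fm Agent Msg} (h : L.Thm (φ.imp (ψ.imp χ))) :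
    L.Thm (ψ.imp (φ.imp χ)) :=
  L.mp (L.taut (φ := (φ.imp (ψ.imp χ)).imp (ψ.imp (φ.imp χ))) fun _ hφψχ hψ hφ => hφψχ hφ hψ) h

theorem thm_proves_mp {M : Msg} {a : Agent} {φ ψ : Fm Agent Msg}
    (himp : L.Thm (.proves M a (φ.imp ψ))) (hφ : L.Thm (.proves M a φ)) :
    L.Thm (.proves M a ψ) :=
  L.mp (L.mp (L.kripke M a φ ψ) himp) hφ

theorem thm_proves_of_thm_knows_imp {M : Msg} {a : Agent} {φ : Fm Agent Msg}
    (h : L.Thm ((Fm.knows a M).imp φ)) : L.Thm (.proves M a φ) :=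
  L.thm_proves_mp (L.nec M a h) (L.selfKnow M a)

end LDiiP

/-- Self-proof of truthfulness: ⊢ M ⊩_a ((M ⊩_a φ) → φ). -/
theorem ldiip_self_proof_of_truthfulness {Agent Msg : Type} (L : LDiiP Agent Msg)
    (M : Msg) (a : Agent) (φ : Fm Agent Msg) :
    L.Thm (Fm.proves M a ((Fm.proves M a φ).imp φ)) :=
  L.thm_proves_of_thm_knows_imp (L.thm_imp_comm (L.epistemic M a φ))
end

section
/- In the logic LDiiP, proof density holds: ⊢ (M ⊩_a (M ⊩_a φ)) → (M ⊩_a φ). -/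
/- Necessitating epistemic truthfulness and distributing with Kripke's law gives
`M ⊩ (M ⊩ φ) → M ⊩ (k_a(M) → φ)`; a second use of Kripke's law, discharged by self-knowledge
`M ⊩ k_a(M)`, removes the premise `k_a(M)`. -/

namespace LDiiP

variable {Agent Msg : Type} (L : LDiiP Agent Msg)

theorem thm_imp_trans {φ ψ χ : Fm Agent Msg} (hφψ : L.Thm (φ.imp ψ)) (hψχ : L.Thm (ψ.imp χ)) :
    L.Thm (φ.imp χ) := by
  have hsyll : ((φ.imp ψ).imp ((ψ.imp χ).imp (φ.imp χ))).Taut := fun v => by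
    simp only [Fm.eval]
    tauto
  exact L.mp (L.mp (L.taut hsyll) hφψ) hψχ

theorem thm_imp_of_imp_imp {φ ψ χ : Fm Agent Msg} (h : L.Thm (φ.imp (ψ.imp χ)))
    (hψ : L.Thm ψ) : L.Thm (φ.imp χ) := by
  have hswap : ((φ.imp (ψ.imp χ)).imp (ψ.imp (φ.imp χ))).Taut := fun v => by
    simp only [Fm.eval]
    tauto
  exact L.mp (L.mp (L.taut hswap) h) hψ

theorem thm_proves_imp_proves (M : Msg) (a : Agent) {φ ψ : Fm Agent Msg}
    (h : L.Thm (φ.imp ψ)) : L.Thm ((Fm.proves M a φ).imp (Fm.proves M a ψ)) :=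
  L.mp (L.kripke M a φ ψ) (L.nec M a h)

theorem thm_proves_knows_imp (M : Msg) (a : Agent) (φ : Fm Agent Msg) :
    L.Thm ((Fm.proves M a ((Fm.knows a M).imp φ)).imp (Fm.proves M a φ)) :=
  L.thm_imp_of_imp_imp (L.kripke M a _ φ) (L.selfKnow M a)

end LDiiP

/-- Proof density: ⊢ (M ⊩_a (M ⊩_a φ)) → (M ⊩_a φ). -/
theorem ldiip_proof_density {Agent Msg : Type} (L : LDiiP Agent Msg)
    (M : Msg) (a : Agent) (φ : Fm Agent Msg) :
    L.Thm ((Fm.proves M a (Fm.proves M a φ)).imp (Fm.proves M a φ)) :=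
  L.thm_imp_trans (L.thm_proves_imp_proves M a (L.epistemic M a φ))
    (L.thm_proves_knows_imp M a φ)
end

section
/- In the logic LDiiP, maximal consistency holds: ⊢ (M ⊩_a ¬φ) ↔ ¬(M ⊩_a φ). -/
/-! Negation completeness gives `¬(M ⊩_a φ) → M ⊩_a ¬φ`. Conversely, `M ⊩_a ¬φ` and `M ⊩_a φ`
together yield `M ⊩_a ⊥` by Kripke's law, which proof consistency rules out. -/

namespace LDiiP

variable {Agent Msg : Type} (L : LDiiP Agent Msg)

theorem mp_taut {φ ψ : Fm Agent Msg} (h : (φ.imp ψ).Taut) (hφ : L.Thm φ) : L.Thm ψ :=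
  L.mp (L.taut h) hφ

theorem and_intro {φ ψ : Fm Agent Msg} (hφ : L.Thm φ) (hψ : L.Thm ψ) : L.Thm (φ.and ψ) :=
  L.mp (L.mp_taut (ψ := ψ.imp (φ.and ψ)) (fun _ hφ hψ => ⟨hφ, hψ⟩) hφ) hψ

theorem proves_mono (M : Msg) (a : Agent) {φ ψ : Fm Agent Msg} (h : (φ.imp ψ).Taut) :
    L.Thm ((Fm.proves M a φ).imp (Fm.proves M a ψ)) :=
  L.mp (L.kripke M a φ ψ) (L.nec M a (L.taut h))

theorem proves_neg_imp_neg_proves (M : Msg) (a : Agent) (φ : Fm Agent Msg) :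
    L.Thm ((Fm.proves M a (Fm.neg φ)).imp (Fm.neg (Fm.proves M a φ))) := by
  have hmono := L.proves_mono M a (φ := Fm.neg φ) (ψ := φ.imp Fm.bot) fun _ h => h
  have hkripke := L.kripke M a φ Fm.bot
  refine L.mp_taut ?_ (L.and_intro (L.and_intro hmono hkripke) (L.consistency M a))
  intro v
  simp only [Fm.eval]
  tauto

end LDiiP

/-- Maximal consistency: ⊢ (M ⊩_a ¬φ) ↔ ¬(M ⊩_a φ). -/
theorem ldiip_maximal_consistency {Agent Msg : Type} (L : LDiiP Agent Msg)
    (M : Msg) (a : Agent) (φ : Fm Agent Msg) :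
    L.Thm (Fm.iff (Fm.proves M a (Fm.neg φ)) (Fm.neg (Fm.proves M a φ))) := by
  have hsound := L.proves_neg_imp_neg_proves M a φ
  have hcomplete := L.negComplete M a φ
  refine L.mp_taut ?_ (L.and_intro hsound hcomplete)
  intro v
  simp only [Fm.eval, Fm.iff]
  tauto
end

section
/- Soundness of the LDiiP-specific axioms: in any Kripke model whose accessibility relations →_{M,a} are serial, functional, conditionally reflexive (M ∈ K_a(s) implies s →_{M,a} s), and satisfy the epistemic-image property (s →_{M,a} s' implies M ∈ K_a(s')), and where the valuation of the atom k_a(M) at state s is 'M ∈ K_a(s)', the following are valid at every state: (i) M ⊩_a k_a(M); (ii) (M ⊩_a φ) → (k_a(M) → φ); (iii) ¬(M ⊩_a ⊥); (iv) (M ⊩_a φ) ∨ (M ⊩_a ¬φ), where M ⊩_a φ is true at s iff φ is true at every →_{M,a}-successor of s. -/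
/-- Kripke satisfaction: `proves M a` is the necessity modality for the
accessibility relation `acc M a`, and the atom `knows a M` holds at `s`
iff `M ∈ K a s`. -/
def sat {Agent Msg S : Type} (acc : Msg → Agent → S → S → Prop)
    (K : Agent → S → Set Msg) (V : Nat → S → Prop) :
    S → Fm Agent Msg → Prop
  | s, .atom n => V n s
  | s, .knows a M => M ∈ K a s
  | _, .bot => False
  | s, .imp p q => sat acc K V s p → sat acc K V s q
  | s, .and p q => sat acc K V s p ∧ sat acc K V s q
  | s, .or p q => sat acc K V s p ∨ sat acc K V s q
  | s, .neg p => ¬ sat acc K V s p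
  | s, .proves M a p => ∀ s', acc M a s s' → sat acc K V s' p

/-! Seriality and functionality give every state `s` a unique `acc M a`-successor `t`, and
`M ⊩_a φ` holds at `s` exactly when `φ` holds at `t`; consistency and negation completeness
follow. Self-knowledge is the epistemic-image property, and truthfulness is conditional
reflexivity: knowing `M` makes `s` its own successor. -/

section Modality

variable {Agent Msg S : Type} {acc : Msg → Agent → S → S → Prop}
  {K : Agent → S → Set Msg} {V : Nat → S → Prop} {M : Msg} {a : Agent} {s t : S}

theorem sat_proves_iff_of_functional (ht : acc M a s t)
    (hfunc : ∀ t', acc M a s t' → t' = t) (φ : Fm Agent Msg) :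
    sat acc K V s (.proves M a φ) ↔ sat acc K V t φ := by
  refine ⟨fun h => h t ht, fun h t' ht' => ?_⟩
  rwa [hfunc t' ht']

theorem sat_proves_or_sat_proves_neg_of_functional (ht : acc M a s t)
    (hfunc : ∀ t', acc M a s t' → t' = t) (φ : Fm Agent Msg) :
    sat acc K V s ((Fm.proves M a φ).or (Fm.proves M a φ.neg)) :=
  (em (sat acc K V t φ)).imp (sat_proves_iff_of_functional ht hfunc φ).mpr
    (sat_proves_iff_of_functional ht hfunc φ.neg).mpr

end Modality

/-- Soundness of the LDiiP-specific axioms in any Kripke model whose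
accessibility relations are serial, functional, conditionally reflexive and
satisfy the epistemic-image property: (i) self-knowledge, (ii) epistemic
truthfulness, (iii) proof consistency, (iv) negation completeness are valid
at every state. -/
theorem ldiip_axioms_sound {Agent Msg S : Type}
    (acc : Msg → Agent → S → S → Prop)
    (K : Agent → S → Set Msg) (V : Nat → S → Prop)
    (hserial : ∀ (M : Msg) (a : Agent) (s : S), ∃ s', acc M a s s')
    (hfunc : ∀ (M : Msg) (a : Agent) (s s' s'' : S),
      acc M a s s' → acc M a s s'' → s' = s'')
    (hcondRefl : ∀ (M : Msg) (a : Agent) (s : S), M ∈ K a s → acc M a s s)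
    (hepiImg : ∀ (M : Msg) (a : Agent) (s s' : S), acc M a s s' → M ∈ K a s') :
    ∀ (s : S) (M : Msg) (a : Agent) (φ : Fm Agent Msg),
      sat acc K V s (Fm.proves M a (Fm.knows a M)) ∧
      sat acc K V s ((Fm.proves M a φ).imp ((Fm.knows a M).imp φ)) ∧
      sat acc K V s (Fm.neg (Fm.proves M a Fm.bot)) ∧
      sat acc K V s ((Fm.proves M a φ).or (Fm.proves M a (Fm.neg φ))) := by
  intro s M a φ
  obtain ⟨t, ht⟩ := hserial M a s
  refine ⟨hepiImg M a s, ?truthfulness, fun hbot => hbot t ht, ?completeness⟩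
  case truthfulness => exact fun hφ hknows => hφ s (hcondRefl M a s hknows)
  case completeness =>
    exact sat_proves_or_sat_proves_neg_of_functional ht
      (fun t' ht' => hfunc M a s t' t ht' ht) φ
end

section
/- Minimal filtration preserves the LDiiP frame conditions: given a Kripke model with serial, functional, conditionally reflexive accessibility relations satisfying the epistemic-image property, its minimal filtration through a finite set Γ of formulas (states quotiented by agreement on Γ, with relation [s] →^{min} [s'] iff there exist representatives with s →s', and knowledge defined via the valuation of k_a(M)) is again serial and satisfies conditional reflexivity and the epistemic-image property; hence every satisfiable LDiiP-formula is satisfiable in a finite model. -/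
/-- A Kripke model for LDiiP: serial, functional, conditionally reflexive
accessibility relations satisfying the epistemic-image property. -/
structure KModel (Agent Msg : Type) where
  S : Type
  acc : Msg → Agent → S → S → Prop
  K : Agent → S → Set Msg
  V : Nat → S → Prop
  serial : ∀ (M : Msg) (a : Agent) (s : S), ∃ s', acc M a s s'
  func : ∀ (M : Msg) (a : Agent) (s s' s'' : S),
    acc M a s s' → acc M a s s'' → s' = s''
  condRefl : ∀ (M : Msg) (a : Agent) (s : S), M ∈ K a s → acc M a s s
  epiImg : ∀ (M : Msg) (a : Agent) (s s' : S), acc M a s s' → M ∈ K a s'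

/-- Agreement of two states on all formulas of `Γ` (the filtration
equivalence `∼_Γ`). -/
def simΓ {Agent Msg : Type} (Mo : KModel Agent Msg) (Γ : Set (Fm Agent Msg))
    (s s' : Mo.S) : Prop :=
  ∀ γ ∈ Γ, (sat Mo.acc Mo.K Mo.V s γ ↔ sat Mo.acc Mo.K Mo.V s' γ)

/-- The minimal-filtration relation, expressed on representatives:
`[s] →min [t]` iff some `u ∼_Γ s` and `v ∼_Γ t` satisfy `u → v`. -/
def accMin {Agent Msg : Type} (Mo : KModel Agent Msg) (Γ : Set (Fm Agent Msg))
    (M : Msg) (a : Agent) (s t : Mo.S) : Prop :=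
  ∃ u v : Mo.S, simΓ Mo Γ u s ∧ simΓ Mo Γ v t ∧ Mo.acc M a u v

/-!
The frame conditions pass to `accMin` through representatives: seriality and conditional
reflexivity by taking `s` itself, the epistemic-image property because `knows a M ∈ Γ` makes
`M ∈ K a ·` constant on `∼_Γ`-classes. For the finite model property the minimal relation
is of no use, as it need not be functional; instead we filter through the subformulas of `φ`
(closed under `proves M a ψ ↦ knows a M`) and let each class step to the class of the
successor of a fixed representative. A class then satisfies `proves M a p` exactly when its
representative does, which gives the truth lemma, and the quotient is finite since a class is
determined by the finitely many subformulas it satisfies.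
-/

namespace Fm

variable {Agent Msg : Type}

def subformulas : Fm Agent Msg → Set (Fm Agent Msg)
  | .atom n => {.atom n}
  | .knows a M => {.knows a M}
  | .bot => {.bot}
  | .imp p q => insert (.imp p q) (p.subformulas ∪ q.subformulas)
  | .and p q => insert (.and p q) (p.subformulas ∪ q.subformulas)
  | .or p q => insert (.or p q) (p.subformulas ∪ q.subformulas)
  | .neg p => insert (.neg p) p.subformulas
  | .proves M a p => insert (.proves M a p) (insert (.knows a M) p.subformulas)

theorem mem_subformulas_self (φ : Fm Agent Msg) : φ ∈ φ.subformulas := by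
  cases φ <;> simp [subformulas]

theorem finite_subformulas (φ : Fm Agent Msg) : φ.subformulas.Finite := by
  induction φ <;> simp_all [subformulas]

theorem subformulas_subset_of_mem {φ γ : Fm Agent Msg} (h : γ ∈ φ.subformulas) :
    γ.subformulas ⊆ φ.subformulas := by
  induction φ with
  | atom | knows | bot => simp_all [subformulas]
  | imp p q ihp ihq | and p q ihp ihq | or p q ihp ihq =>
    simp only [subformulas, Set.mem_insert_iff, Set.mem_union] at h ⊢
    rcases h with rfl | h | h
    · rfl
    · exact (ihp h).trans (Set.subset_union_left.trans (Set.subset_insert _ _))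
    · exact (ihq h).trans (Set.subset_union_right.trans (Set.subset_insert _ _))
  | neg p ih =>
    simp only [subformulas, Set.mem_insert_iff] at h ⊢
    rcases h with rfl | h
    · rfl
    · exact (ih h).trans (Set.subset_insert _ _)
  | proves M a p ih =>
    simp only [subformulas, Set.mem_insert_iff] at h ⊢
    rcases h with rfl | rfl | h
    · rfl
    · simp [subformulas]
    · exact (ih h).trans ((Set.subset_insert _ _).trans (Set.subset_insert _ _))

end Fm

namespace KModel

variable {Agent Msg : Type} (Mo : KModel Agent Msg)

abbrev Sat : Mo.S → Fm Agent Msg → Prop := sat Mo.acc Mo.K Mo.V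

theorem simΓ_refl (Γ : Set (Fm Agent Msg)) (s : Mo.S) : simΓ Mo Γ s s :=
  fun _ _ => Iff.rfl

theorem exists_accMin (Γ : Set (Fm Agent Msg)) (M : Msg) (a : Agent) (s : Mo.S) :
    ∃ t, accMin Mo Γ M a s t :=
  let ⟨t, hst⟩ := Mo.serial M a s
  ⟨t, s, t, Mo.simΓ_refl Γ s, Mo.simΓ_refl Γ t, hst⟩

theorem accMin_self_of_mem_K (Γ : Set (Fm Agent Msg)) {M : Msg} {a : Agent} {s : Mo.S}
    (hK : M ∈ Mo.K a s) : accMin Mo Γ M a s s :=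
  ⟨s, s, Mo.simΓ_refl Γ s, Mo.simΓ_refl Γ s, Mo.condRefl M a s hK⟩

theorem mem_K_of_accMin {Γ : Set (Fm Agent Msg)} {M : Msg} {a : Agent} {s t : Mo.S}
    (hΓ : Fm.knows a M ∈ Γ) (h : accMin Mo Γ M a s t) : M ∈ Mo.K a t :=
  let ⟨u, v, _, hvt, huv⟩ := h
  (hvt _ hΓ).mp (Mo.epiImg M a u v huv)

def agreement (Δ : Set (Fm Agent Msg)) : Setoid Mo.S where
  r := simΓ Mo Δ
  iseqv := ⟨Mo.simΓ_refl Δ, fun h γ hγ => (h γ hγ).symm,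
    fun h h' γ hγ => (h γ hγ).trans (h' γ hγ)⟩

theorem out_agrees (Δ : Set (Fm Agent Msg)) (s : Mo.S) :
    simΓ Mo Δ (Quotient.mk (Mo.agreement Δ) s).out s :=
  Quotient.mk_out (s := Mo.agreement Δ) s

/-- Where `knows a M ∉ Δ`, the message `M` is known everywhere, so conditional reflexivity and
functionality force the identity relation. -/
noncomputable def filtration (Δ : Set (Fm Agent Msg)) : KModel Agent Msg :=
  open Classical in
  { S := Quotient (Mo.agreement Δ)
    acc := fun M a C D => if Fm.knows a M ∈ Δ then
      ∃ t, Mo.acc M a C.out t ∧ Quotient.mk _ t = D else C = D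
    K := fun a C => {M | Fm.knows a M ∈ Δ → M ∈ Mo.K a C.out}
    V := fun n C => Mo.V n C.out
    serial := fun M a C => by
      split_ifs
      · obtain ⟨t, ht⟩ := Mo.serial M a C.out
        exact ⟨_, t, ht, rfl⟩
      · exact ⟨C, rfl⟩
    func := fun M a C D D' hD hD' => by
      split_ifs at hD hD'
      · obtain ⟨t, ht, rfl⟩ := hD
        obtain ⟨t', ht', rfl⟩ := hD'
        rw [Mo.func M a _ _ _ ht ht']
      · exact hD.symm.trans hD'
    condRefl := fun M a C hK => by
      split_ifs with hk
      · exact ⟨C.out, Mo.condRefl M a _ (hK hk), C.out_eq⟩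
      · rfl
    epiImg := fun M a C D hD hk => by
      rw [if_pos hk] at hD
      obtain ⟨t, ht, rfl⟩ := hD
      exact (Mo.out_agrees Δ t _ hk).mpr (Mo.epiImg M a _ t ht) }

variable {Mo}

theorem filtration_acc_iff {Δ : Set (Fm Agent Msg)} {M : Msg} {a : Agent}
    (hk : Fm.knows a M ∈ Δ) (C D : (Mo.filtration Δ).S) :
    (Mo.filtration Δ).acc M a C D ↔ ∃ t, Mo.acc M a C.out t ∧ Quotient.mk _ t = D := by
  simp only [filtration, if_pos hk]

theorem sat_filtration_mk_iff {Δ : Set (Fm Agent Msg)}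
    (hΔ : ∀ γ ∈ Δ, γ.subformulas ⊆ Δ) {φ : Fm Agent Msg} (hφ : φ ∈ Δ) (s : Mo.S) :
    (Mo.filtration Δ).Sat (Quotient.mk (Mo.agreement Δ) s) φ ↔ Mo.Sat s φ := by
  induction φ generalizing s with
  | atom n => exact Mo.out_agrees Δ s _ hφ
  | knows a M => exact (imp_iff_right hφ).trans (Mo.out_agrees Δ s _ hφ)
  | bot => exact Iff.rfl
  | imp p q ihp ihq =>
    have hp : p ∈ Δ := hΔ _ hφ (by simp [Fm.subformulas, Fm.mem_subformulas_self])
    have hq : q ∈ Δ := hΔ _ hφ (by simp [Fm.subformulas, Fm.mem_subformulas_self])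
    exact imp_congr (ihp hp s) (ihq hq s)
  | and p q ihp ihq =>
    have hp : p ∈ Δ := hΔ _ hφ (by simp [Fm.subformulas, Fm.mem_subformulas_self])
    have hq : q ∈ Δ := hΔ _ hφ (by simp [Fm.subformulas, Fm.mem_subformulas_self])
    exact and_congr (ihp hp s) (ihq hq s)
  | or p q ihp ihq =>
    have hp : p ∈ Δ := hΔ _ hφ (by simp [Fm.subformulas, Fm.mem_subformulas_self])
    have hq : q ∈ Δ := hΔ _ hφ (by simp [Fm.subformulas, Fm.mem_subformulas_self])
    exact or_congr (ihp hp s) (ihq hq s)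
  | neg p ih =>
    have hp : p ∈ Δ := hΔ _ hφ (by simp [Fm.subformulas, Fm.mem_subformulas_self])
    exact not_congr (ih hp s)
  | proves M a p ih =>
    have hp : p ∈ Δ := hΔ _ hφ (by simp [Fm.subformulas, Fm.mem_subformulas_self])
    have hk : Fm.knows a M ∈ Δ := hΔ _ hφ (by simp [Fm.subformulas])
    calc (Mo.filtration Δ).Sat (Quotient.mk _ s) (.proves M a p)
        ↔ ∀ t, Mo.acc M a (Quotient.mk (Mo.agreement Δ) s).out t →
            (Mo.filtration Δ).Sat (Quotient.mk _ t) p := by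
          refine ⟨fun h t ht => h _ ((filtration_acc_iff hk _ _).2 ⟨t, ht, rfl⟩),
            fun h D hD => ?_⟩
          obtain ⟨t, ht, rfl⟩ := (filtration_acc_iff hk _ _).1 hD
          exact h t ht
      _ ↔ Mo.Sat (Quotient.mk (Mo.agreement Δ) s).out (.proves M a p) :=
          forall₂_congr fun t _ => ih hp t
      _ ↔ Mo.Sat s (.proves M a p) := Mo.out_agrees Δ s _ hφ

theorem finite_filtration {Δ : Set (Fm Agent Msg)} (hΔ : Δ.Finite) :
    Finite (Mo.filtration Δ).S := by
  have : Finite Δ := hΔ.to_subtype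
  let truthSet : (Mo.filtration Δ).S → (Δ → Prop) :=
    Quotient.lift (fun s γ => Mo.Sat s γ) fun s t hst => funext fun γ => propext (hst γ γ.2)
  refine Finite.of_injective truthSet fun C D h => ?_
  induction C, D using Quotient.inductionOn₂ with
  | h s t => exact Quotient.sound fun γ hγ => iff_of_eq (congrFun h ⟨γ, hγ⟩)

end KModel

theorem minimal_filtration_preserves_ldiip_general {Agent Msg : Type}
    (Mo : KModel Agent Msg) (Γ : Set (Fm Agent Msg)) :
    (∀ (M : Msg) (a : Agent) (s : Mo.S), ∃ t, accMin Mo Γ M a s t) ∧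
    (∀ (M : Msg) (a : Agent) (s : Mo.S),
      Fm.knows a M ∈ Γ → M ∈ Mo.K a s → accMin Mo Γ M a s s) ∧
    (∀ (M : Msg) (a : Agent) (s t : Mo.S),
      Fm.knows a M ∈ Γ → accMin Mo Γ M a s t → M ∈ Mo.K a t) ∧
    (∀ φ : Fm Agent Msg, (∃ s : Mo.S, sat Mo.acc Mo.K Mo.V s φ) →
      ∃ Mo' : KModel Agent Msg, Finite Mo'.S ∧
        ∃ s' : Mo'.S, sat Mo'.acc Mo'.K Mo'.V s' φ) := by
  refine ⟨Mo.exists_accMin Γ, fun _ _ _ _ hK => Mo.accMin_self_of_mem_K Γ hK,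
    fun _ _ _ _ hΓ h => Mo.mem_K_of_accMin hΓ h, ?_⟩
  rintro φ ⟨s, hs⟩
  refine ⟨Mo.filtration φ.subformulas, KModel.finite_filtration φ.finite_subformulas,
    Quotient.mk _ s, ?_⟩
  exact (KModel.sat_filtration_mk_iff (fun _ => Fm.subformulas_subset_of_mem)
    φ.mem_subformulas_self s).mpr hs

/-- Minimal filtration through a finite, suitably closed set `Γ` preserves
the LDiiP frame conditions (seriality, conditional reflexivity and the
epistemic-image property, with the knowledge of a class given by the
valuation of `knows a M`); hence every satisfiable LDiiP-formula is
satisfiable in a finite model. -/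
theorem minimal_filtration_preserves_ldiip {Agent Msg : Type}
    (Mo : KModel Agent Msg) (Γ : Set (Fm Agent Msg)) (hfin : Γ.Finite)
    (hsub : ∀ (M : Msg) (a : Agent) (ψ : Fm Agent Msg),
      Fm.proves M a ψ ∈ Γ → Fm.knows a M ∈ Γ) :
    (∀ (M : Msg) (a : Agent) (s : Mo.S), ∃ t, accMin Mo Γ M a s t) ∧
    (∀ (M : Msg) (a : Agent) (s : Mo.S),
      Fm.knows a M ∈ Γ → M ∈ Mo.K a s → accMin Mo Γ M a s s) ∧
    (∀ (M : Msg) (a : Agent) (s t : Mo.S),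
      Fm.knows a M ∈ Γ → accMin Mo Γ M a s t → M ∈ Mo.K a t) ∧
    (∀ φ : Fm Agent Msg, (∃ s : Mo.S, sat Mo.acc Mo.K Mo.V s φ) →
      ∃ Mo' : KModel Agent Msg, Finite Mo'.S ∧
        ∃ s' : Mo'.S, sat Mo'.acc Mo'.K Mo'.V s' φ) :=
  minimal_filtration_preserves_ldiip_general Mo Γ
end
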